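/- Fix an integer g ≥ 1 and a symmetric g×g complex matrix τ whose imaginary part is positive definite. Then the 2^g second-order theta functions Θ_a : ℂ^g → ℂ, for a ∈ {0,1}^g, are linearly independent over ℂ: if (c_a) are complex numbers with ∑_{a ∈ {0,1}^g} c_a Θ_a(z) = 0 for all z ∈ ℂ^g, then c_a = 0 for every a. -/

import Mathlib

open Finset Complex

/-- The summand of the Riemann theta series:
`exp(πi·nᵀτn + 2πi·nᵀz)` for `n ∈ ℤ^g`. -/
noncomputable def riemannThetaTerm {g : ℕ} (τ : Matrix (Fin g) (Fin g) ℂ)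
    (z : Fin g → ℂ) (n : Fin g → ℤ) : ℂ :=
  Complex.exp ((Real.pi : ℂ) * Complex.I *
      (∑ i : Fin g, ∑ j : Fin g, (n i : ℂ) * τ i j * (n j : ℂ)) +
    2 * (Real.pi : ℂ) * Complex.I * ∑ i : Fin g, (n i : ℂ) * z i)

/-- The Riemann theta function `θ(z) = ∑_{n ∈ ℤ^g} exp(πi·nᵀτn + 2πi·nᵀz)`. -/
noncomputable def riemannTheta {g : ℕ} (τ : Matrix (Fin g) (Fin g) ℂ)
    (z : Fin g → ℂ) : ℂ :=
  ∑' n : Fin g → ℤ, riemannThetaTerm τ z n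

/-- The second-order theta function with characteristic `a ∈ {0,1}^g`:
`Θ_a(z) = ∑_{n ∈ ℤ^g} exp(2πi·(n+a/2)ᵀτ(n+a/2) + 4πi·(n+a/2)ᵀz)`. -/
noncomputable def theta2 {g : ℕ} (τ : Matrix (Fin g) (Fin g) ℂ)
    (a : Fin g → Fin 2) (z : Fin g → ℂ) : ℂ :=
  ∑' n : Fin g → ℤ,
    Complex.exp (2 * (Real.pi : ℂ) * Complex.I *
        (∑ i : Fin g, ∑ j : Fin g,
          ((n i : ℂ) + ((a i : ℕ) : ℂ) / 2) * τ i j * ((n j : ℂ) + ((a j : ℕ) : ℂ) / 2)) +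
      4 * (Real.pi : ℂ) * Complex.I *
        ∑ i : Fin g, ((n i : ℂ) + ((a i : ℕ) : ℂ) / 2) * z i)

/-!
Substituting `m = 2n + a`, the function `Θ_a` becomes the part of the Riemann theta series of
`τ / 2` supported on the residue class `m ≡ a (mod 2)`. Hence on real arguments `z = x`, a
combination `∑ c_a Θ_a` is the Fourier series `∑_m c_{m mod 2} e^{πi mᵀτm/2} e^{2πi m·x}` on the
torus `ℝ^g / ℤ^g`, absolutely convergent because `Im τ` is positive definite: the terms are
bounded by a product of one-variable Gaussians. If it vanishes identically, orthonormality of the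
characters forces all its coefficients to vanish, and the coefficient at `m = a` is `c_a` times a
nonzero exponential.
-/

open Matrix Real

theorem summable_exp_neg_mul_sq_sub (y : ℝ) {t : ℝ} (ht : 0 < t) :
    Summable fun n : ℤ => rexp (-π * n ^ 2 * t - 2 * π * n * y) := by
  have := ((summable_jacobiTheta₂_term_iff (y * I) (t * I)).2 (by simpa using ht)).norm
  simpa [norm_jacobiTheta₂_term] using this

theorem summable_fintype_prod_of_nonneg {ι β : Type*} [Fintype ι] {f : ι → β → ℝ}
    (hf₀ : ∀ i b, 0 ≤ f i b) (hf : ∀ i, Summable (f i)) :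
    Summable fun n : ι → β => ∏ i, f i (n i) := by
  suffices key : ∀ (α : Type _) [Fintype α] (f : α → β → ℝ), (∀ i b, 0 ≤ f i b) →
      (∀ i, Summable (f i)) → Summable fun n : α → β => ∏ i, f i (n i) from key ι f hf₀ hf
  refine Fintype.induction_empty_option ?_ ?_ ?_
  · intro α γ _ e ih f hf₀ hf
    let _ := Fintype.ofEquiv γ e.symm
    have := ih (fun i => f (e i)) (fun i => hf₀ (e i)) (fun i => hf (e i))
    refine (e.arrowCongr (.refl β)).summable_iff.mp ?_
    convert this using 2 with n
    exact (Fintype.prod_equiv e _ _ fun i => by simp).symm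
  · exact fun _ _ _ => .of_finite
  · intro α _ ih f hf₀ hf
    refine Equiv.piOptionEquivProd.symm.summable_iff.mp ?_
    simp only [Function.comp_def, Fintype.prod_option]
    exact (hf none).mul_of_nonneg (ih _ (fun i => hf₀ _) (fun i => hf _)) (hf₀ none)
      fun n => Finset.prod_nonneg fun i _ => hf₀ _ _

theorem exists_pos_mul_norm_sq_le {E : Type*} [NormedAddCommGroup E] [NormedSpace ℝ E]
    [FiniteDimensional ℝ E] {Q : E → ℝ} (hQ : Continuous Q)
    (hQ_smul : ∀ (c : ℝ) v, Q (c • v) = c ^ 2 * Q v) (hQ_pos : ∀ v ≠ 0, 0 < Q v) :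
    ∃ ε > 0, ∀ v, ε * ‖v‖ ^ 2 ≤ Q v := by
  have hQ_zero : Q 0 = 0 := by simpa using hQ_smul 0 0
  cases subsingleton_or_nontrivial E with
  | inl _ => exact ⟨1, one_pos, fun v => by simp [Subsingleton.elim v 0, hQ_zero]⟩
  | inr _ =>
    obtain ⟨v₀, hv₀, hmin⟩ := (isCompact_sphere (0 : E) 1).exists_isMinOn
      (NormedSpace.sphere_nonempty.2 zero_le_one) hQ.continuousOn
    refine ⟨Q v₀, hQ_pos v₀ (ne_zero_of_mem_unit_sphere ⟨v₀, hv₀⟩), fun v => ?_⟩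
    rcases eq_or_ne v 0 with rfl | hv
    · simp [hQ_zero]
    have hu : ‖v‖⁻¹ • v ∈ Metric.sphere (0 : E) 1 := by
      simp [norm_smul, inv_mul_cancel₀ (norm_ne_zero_iff.2 hv)]
    calc Q v₀ * ‖v‖ ^ 2 ≤ Q (‖v‖⁻¹ • v) * ‖v‖ ^ 2 := by gcongr; exact hmin hu
      _ = Q v := by
        rw [hQ_smul, mul_comm, ← mul_assoc, ← mul_pow, mul_inv_cancel₀ (norm_ne_zero_iff.2 hv),
          one_pow, one_mul]

theorem Matrix.PosDef.exists_pos_mul_sum_sq_le {ι : Type*} [Fintype ι] {Y : Matrix ι ι ℝ}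
    (hY : Y.PosDef) : ∃ ε > 0, ∀ v : ι → ℝ, ε * ∑ i, v i ^ 2 ≤ v ⬝ᵥ Y *ᵥ v := by
  obtain ⟨ε, hε, hle⟩ := exists_pos_mul_norm_sq_le (E := EuclideanSpace ℝ ι)
    (Q := fun w => w.ofLp ⬝ᵥ Y *ᵥ w.ofLp) (by fun_prop)
    (fun c w => by simp [Matrix.mulVec_smul]; ring)
    (fun w hw => by simpa using hY.dotProduct_mulVec_pos (x := w.ofLp) (by simpa using hw))
  refine ⟨ε, hε, fun v => ?_⟩
  simpa [EuclideanSpace.real_norm_sq_eq] using hle (WithLp.toLp 2 v)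

theorem norm_riemannThetaTerm {g : ℕ} (τ : Matrix (Fin g) (Fin g) ℂ) (z : Fin g → ℂ)
    (n : Fin g → ℤ) :
    ‖riemannThetaTerm τ z n‖ = Real.exp (-π * ((fun i => (n i : ℝ)) ⬝ᵥ
      (Matrix.of fun i j => (τ i j).im) *ᵥ fun i => (n i : ℝ)) -
      2 * π * ∑ i, n i * (z i).im) := by
  simp [riemannThetaTerm, Complex.norm_exp, dotProduct, mulVec, Complex.mul_re, Finset.mul_sum,
    mul_assoc, sub_eq_add_neg]

theorem summable_riemannThetaTerm {g : ℕ} {τ : Matrix (Fin g) (Fin g) ℂ}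
    (hτ : (Matrix.of fun i j => (τ i j).im).PosDef) (z : Fin g → ℂ) :
    Summable (riemannThetaTerm τ z) := by
  obtain ⟨ε, hε, hquad⟩ := hτ.exists_pos_mul_sum_sq_le
  refine Summable.of_norm_bounded (summable_fintype_prod_of_nonneg
    (f := fun i (m : ℤ) => Real.exp (-π * m ^ 2 * ε - 2 * π * m * (z i).im))
    (fun _ _ => (Real.exp_pos _).le) fun i => summable_exp_neg_mul_sq_sub _ hε) fun n => ?_
  rw [norm_riemannThetaTerm, ← Real.exp_sum, Real.exp_le_exp]
  have hsum : ∑ i, (-π * n i ^ 2 * ε - 2 * π * n i * (z i).im) =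
      -π * (ε * ∑ i, (n i : ℝ) ^ 2) - 2 * π * ∑ i, n i * (z i).im := by
    simp only [Finset.sum_sub_distrib, Finset.mul_sum]
    congr 1 <;> exact Finset.sum_congr rfl fun _ _ => by ring
  rw [hsum]
  nlinarith [hquad fun i => (n i : ℝ), Real.pi_pos]

section Fourier

open UnitAddTorus MeasureTheory

-- Mathlib's Fourier analysis on `UnitAddTorus` uses the Haar probability measure, installed there
-- only as a local instance; the global `MeasureSpace (AddCircle 1)` instance is a different term.
attribute [local instance] instMeasureSpaceUnitAddCircle
  instIsProbabilityMeasureUnitAddCircleVolume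

theorem UnitAddTorus.eq_zero_of_tsum_mul_mFourier_eq_zero {d : Type*} [Fintype d]
    {a : (d → ℤ) → ℂ} (ha : Summable a) (h : ∀ x, ∑' n, a n * mFourier n x = 0) : a = 0 := by
  have hsum : HasSum (fun n => a n • mFourier n) (0 : C(UnitAddTorus d, ℂ)) := by
    have hs : Summable fun n => a n • mFourier n :=
      .of_norm (by simpa only [norm_smul, mFourier_norm, mul_one] using ha.norm)
    convert hs.hasSum
    ext x
    simpa [h] using ((ContinuousMap.evalCLM ℂ x).hasSum hs.hasSum).tsum_eq
  funext m
  have hcoeff := ((innerSL ℂ (mFourierLp 2 m)).comp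
    (ContinuousMap.toLp (E := ℂ) 2 volume ℂ)).hasSum hsum
  simp only [map_zero, map_smul, ContinuousLinearMap.comp_apply, innerSL_apply_apply] at hcoeff
  have hδ : ∀ n, inner ℂ (mFourierLp 2 m) (mFourierLp 2 n) = if m = n then 1 else 0 :=
    orthonormal_iff_ite.mp orthonormal_mFourier m
  simp only [hδ, smul_eq_mul, mul_ite, mul_one, mul_zero] at hcoeff
  simpa using (hasSum_single m fun n hn => if_neg (Ne.symm hn)).unique hcoeff

theorem UnitAddTorus.mFourier_coe_apply {d : Type*} [Fintype d] (n : d → ℤ) (x : d → ℝ) :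
    mFourier n (fun i => (x i : UnitAddCircle)) =
      Complex.exp (2 * π * Complex.I * ∑ i, (n i : ℂ) * x i) := by
  simp [mFourier, ← Complex.exp_sum, Finset.mul_sum, mul_assoc]

theorem eq_zero_of_tsum_mul_exp_eq_zero {d : Type*} [Fintype d] {a : (d → ℤ) → ℂ}
    (ha : Summable a)
    (h : ∀ x : d → ℝ, ∑' n, a n * Complex.exp (2 * π * Complex.I * ∑ i, (n i : ℂ) * x i) = 0) :
    a = 0 := by
  refine UnitAddTorus.eq_zero_of_tsum_mul_mFourier_eq_zero ha fun t => ?_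
  obtain ⟨x, rfl⟩ : ∃ x : d → ℝ, (fun i => (x i : UnitAddCircle)) = t :=
    ⟨fun i => (t i).out, funext fun i => QuotientAddGroup.out_eq' (t i)⟩
  simpa only [mFourier_coe_apply] using h x

end Fourier

theorem riemannThetaTerm_eq_mul_exp {g : ℕ} (τ : Matrix (Fin g) (Fin g) ℂ) (z : Fin g → ℂ)
    (n : Fin g → ℤ) :
    riemannThetaTerm τ z n =
      riemannThetaTerm τ 0 n * Complex.exp (2 * π * Complex.I * ∑ i, (n i : ℂ) * z i) := by
  simp [riemannThetaTerm, ← Complex.exp_add]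

def piIntDivModEquiv (ι : Type*) (N : ℕ) [NeZero N] : (ι → ℤ) ≃ (ι → ℤ) × (ι → Fin N) :=
  (Equiv.piCongrRight fun _ => Int.divModEquiv N).trans (Equiv.arrowProdEquivProdArrow _ _ _)

theorem piIntDivModEquiv_symm_apply {ι : Type*} {N : ℕ} [NeZero N] (q : ι → ℤ) (r : ι → Fin N)
    (i : ι) : (piIntDivModEquiv ι N).symm (q, r) i = q i * N + (r i : ℕ) := rfl

theorem Summable.fintype_mul {α β 𝕜 : Type*} [Fintype β] [RCLike 𝕜]
    {F : α → 𝕜} (hF : Summable F) (c : β → 𝕜) (f : α → β) :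
    Summable fun x => c (f x) * F x :=
  .of_norm_bounded (hF.norm.mul_left ‖c‖) fun _ =>
    (norm_mul_le _ _).trans (mul_le_mul_of_nonneg_right (norm_le_pi_norm c _) (norm_nonneg _))

theorem sum_mul_tsum_piIntDivModEquiv_symm {ι : Type*} [Fintype ι] [DecidableEq ι] {N : ℕ}
    [NeZero N] {F : (ι → ℤ) → ℂ} (hF : Summable F) (c : (ι → Fin N) → ℂ) :
    ∑ r, c r * ∑' q, F ((piIntDivModEquiv ι N).symm (q, r)) =
      ∑' m, c (piIntDivModEquiv ι N m).2 * F m := by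
  set P := piIntDivModEquiv ι N
  set G := fun m => c (P m).2 * F m
  have hG : Summable G := hF.fintype_mul c fun m => (P m).2
  set e := (Equiv.prodComm _ _).trans P.symm
  calc ∑ r, c r * ∑' q, F (P.symm (q, r)) = ∑' r, ∑' q, G (e (r, q)) := by
        simp [tsum_fintype, G, e, P.apply_symm_apply, tsum_mul_left]
    _ = ∑' m, G m := (e.summable_iff.2 hG).tsum_prod.symm.trans (e.tsum_eq G)

theorem theta2_eq_tsum_riemannThetaTerm {g : ℕ} (τ : Matrix (Fin g) (Fin g) ℂ)
    (a : Fin g → Fin 2) (z : Fin g → ℂ) :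
    theta2 τ a z =
      ∑' n, riemannThetaTerm ((2 : ℂ)⁻¹ • τ) z ((piIntDivModEquiv _ 2).symm (n, a)) := by
  refine tsum_congr fun n => ?_
  simp only [riemannThetaTerm, piIntDivModEquiv_symm_apply, Matrix.smul_apply, smul_eq_mul]
  congr 1
  push_cast
  simp only [Finset.mul_sum]
  congr 1 <;> refine Finset.sum_congr rfl fun i _ => ?_
  · refine Finset.sum_congr rfl fun j _ => ?_
    ring
  · ring

theorem theta2_linearIndependent_general (g : ℕ)
    (τ : Matrix (Fin g) (Fin g) ℂ)
    (hτ' : (Matrix.of fun i j => (τ i j).im).PosDef) :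
    ∀ c : (Fin g → Fin 2) → ℂ,
      (∀ z : Fin g → ℂ, ∑ a : Fin g → Fin 2, c a * theta2 τ a z = 0) →
        ∀ a : Fin g → Fin 2, c a = 0 := by
  intro c hc b
  set P := piIntDivModEquiv (Fin g) 2
  set τ₂ : Matrix (Fin g) (Fin g) ℂ := (2 : ℂ)⁻¹ • τ
  have hτ₂ : (Matrix.of fun i j => (τ₂ i j).im).PosDef := by
    convert hτ'.smul (a := (2 : ℝ)⁻¹) (by norm_num) using 1
    ext i j
    simp [τ₂]
  have hexpand (z : Fin g → ℂ) :
      ∑ a, c a * theta2 τ a z = ∑' m, c (P m).2 * riemannThetaTerm τ₂ z m := by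
    simp only [theta2_eq_tsum_riemannThetaTerm]
    exact sum_mul_tsum_piIntDivModEquiv_symm (summable_riemannThetaTerm hτ₂ z) c
  have hcoeff := eq_zero_of_tsum_mul_exp_eq_zero
    ((summable_riemannThetaTerm hτ₂ 0).fintype_mul c fun m => (P m).2) fun x => by
      simpa only [hexpand, riemannThetaTerm_eq_mul_exp τ₂ (fun i => (x i : ℂ)), mul_assoc]
        using hc fun i => x i
  simpa [P, riemannThetaTerm, Complex.exp_ne_zero] using congrFun hcoeff (P.symm (0, b))

/-- the `2^g` second-order theta functions are linearly independent
over `ℂ`: any vanishing linear combination has all coefficients zero. -/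
theorem theta2_linearIndependent (g : ℕ) (hg : 1 ≤ g)
    (τ : Matrix (Fin g) (Fin g) ℂ) (hτ : τ.IsSymm)
    (hτ' : (Matrix.of fun i j => (τ i j).im).PosDef) :
    ∀ c : (Fin g → Fin 2) → ℂ,
      (∀ z : Fin g → ℂ, ∑ a : Fin g → Fin 2, c a * theta2 τ a z = 0) →
        ∀ a : Fin g → Fin 2, c a = 0 :=
  theta2_linearIndependent_general g τ hτ'
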